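/- arXiv:1912.00487 — 4 statements merged into one kernel-verified Lean document; each statement's English description precedes it below -/
import Mathlib

section
/- Let (Ω, ℱ, P) be a probability space, m₀ a positive integer, M : Ω → {1, …, m₀} a random variable (the cluster size), and N₁, …, N_{m₀} integrable real-valued random variables on Ω such that for every m ∈ {1, …, m₀}, E[N_m ∣ σ(M)] = E[N₁ ∣ σ(M)] almost surely (conditional exchangeability given cluster size). Then for every k ∈ {1, …, m₀}, E[∑_{m=1}^{M} N_m] = E[M · N_k]. -/
/-!
On the `σ(M)`-measurable event `{m ≤ M}`, the integrals of `N m` and `N k` agree because their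
conditional expectations given `σ(M)` agree. Summing over `m` turns the cluster total into
`∑ₘ 1{m ≤ M} N k`, which is pointwise `M · N k`.
-/

open MeasureTheory

theorem Nat.sum_Icc_ite_le_eq_mul {R : Type*} [NonAssocSemiring R] {n N : ℕ} (hn : n ≤ N)
    (x : R) : (∑ m ∈ Finset.Icc 1 N, if m ≤ n then x else 0) = n * x := by
  have hfilter : (Finset.Icc 1 N).filter (· ≤ n) = Finset.Icc 1 n := by
    ext m; simp only [Finset.mem_filter, Finset.mem_Icc]; omega
  rw [← Finset.sum_filter, hfilter, Finset.sum_const, Nat.card_Icc, nsmul_eq_mul,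
    Nat.add_sub_cancel]

section

variable {α F : Type*} {m m₀ : MeasurableSpace α} {μ : Measure α} [NormedAddCommGroup F]

theorem ite_zero_eq_indicator_setOf {β : Type*} [Zero β] (p : α → Prop) [DecidablePred p]
    (f : α → β) : (fun x => if p x then f x else 0) = {x | p x}.indicator f := by
  ext x; simp [Set.indicator_apply]

theorem MeasureTheory.Integrable.ite_zero {p : α → Prop} [DecidablePred p] (hp : MeasurableSet {x | p x})
    {f : α → F} (hf : Integrable f μ) : Integrable (fun x => if p x then f x else 0) μ := by
  rw [ite_zero_eq_indicator_setOf]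
  exact hf.indicator hp

variable [NormedSpace ℝ F] [CompleteSpace F]

theorem setIntegral_eq_of_condExp_ae_eq (hm : m ≤ m₀) [SigmaFinite (μ.trim hm)]
    {f g : α → F} (hf : Integrable f μ) (hg : Integrable g μ) (hfg : μ[f | m] =ᵐ[μ] μ[g | m])
    {s : Set α} (hs : MeasurableSet[m] s) : ∫ x in s, f x ∂μ = ∫ x in s, g x ∂μ := by
  rw [← setIntegral_condExp hm hf hs, ← setIntegral_condExp hm hg hs]
  exact setIntegral_congr_ae (hm s hs) (hfg.mono fun x hx _ => hx)

theorem integral_sum_ite_eq_of_condExp_ae_eq (hm : m ≤ m₀) [SigmaFinite (μ.trim hm)]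
    {ι : Type*} {t : Finset ι} {f : ι → α → F} {g : α → F} {p : ι → α → Prop}
    [∀ i, DecidablePred (p i)] (hf : ∀ i ∈ t, Integrable (f i) μ) (hg : Integrable g μ)
    (hfg : ∀ i ∈ t, μ[f i | m] =ᵐ[μ] μ[g | m]) (hp : ∀ i ∈ t, MeasurableSet[m] {x | p i x}) :
    ∫ x, (∑ i ∈ t, if p i x then f i x else 0) ∂μ
      = ∫ x, (∑ i ∈ t, if p i x then g x else 0) ∂μ := by
  rw [integral_finsetSum _ fun i hi => (hf i hi).ite_zero (hm _ (hp i hi)),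
    integral_finsetSum _ fun i hi => hg.ite_zero (hm _ (hp i hi))]
  refine Finset.sum_congr rfl fun i hi => ?_
  rw [ite_zero_eq_indicator_setOf, ite_zero_eq_indicator_setOf,
    integral_indicator (hm _ (hp i hi)), integral_indicator (hm _ (hp i hi))]
  exact setIntegral_eq_of_condExp_ae_eq hm (hf i hi) hg (hfg i hi) (hp i hi)

end

theorem cluster_total_eq_size_times_member_general
    {Ω : Type*} [MeasurableSpace Ω] (P : Measure Ω) [IsProbabilityMeasure P]
    (m₀ : ℕ)
    (M : Ω → ℕ) (hM : Measurable M)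
    (hM_range : ∀ ω, M ω ∈ Finset.Icc 1 m₀)
    (N : ℕ → Ω → ℝ)
    (hN_int : ∀ m ∈ Finset.Icc 1 m₀, Integrable (N m) P)
    (h_exch : ∀ m ∈ Finset.Icc 1 m₀,
      P[N m | MeasurableSpace.comap M inferInstance]
        =ᵐ[P] P[N 1 | MeasurableSpace.comap M inferInstance]) :
    ∀ k ∈ Finset.Icc 1 m₀,
      ∫ ω, (∑ m ∈ Finset.Icc 1 m₀, if m ≤ M ω then N m ω else 0) ∂P
        = ∫ ω, (M ω : ℝ) * N k ω ∂P := by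
  intro k hk
  calc ∫ ω, (∑ m ∈ Finset.Icc 1 m₀, if m ≤ M ω then N m ω else 0) ∂P
      = ∫ ω, (∑ m ∈ Finset.Icc 1 m₀, if m ≤ M ω then N k ω else 0) ∂P :=
        integral_sum_ite_eq_of_condExp_ae_eq hM.comap_le hN_int (hN_int k hk)
          (fun m hm => (h_exch m hm).trans (h_exch k hk).symm)
          (fun m _ => comap_measurable M measurableSet_Ici)
    _ = ∫ ω, (M ω : ℝ) * N k ω ∂P :=
        integral_congr_ae <| ae_of_all _ fun ω =>
          Nat.sum_Icc_ite_le_eq_mul (Finset.mem_Icc.1 (hM_range ω)).2 _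

/-- For clustered data with conditionally exchangeable (given the cluster size `M`)
integrable variables `N 1, …, N m₀`, the expectation of the cluster total
`∑_{m=1}^{M} N m` equals `E[M · N k]` for every member index `k ∈ {1, …, m₀}`. -/
theorem cluster_total_eq_size_times_member
    {Ω : Type*} [MeasurableSpace Ω] (P : Measure Ω) [IsProbabilityMeasure P]
    (m₀ : ℕ) (hm₀ : 0 < m₀)
    (M : Ω → ℕ) (hM : Measurable M)
    (hM_range : ∀ ω, M ω ∈ Finset.Icc 1 m₀)
    (N : ℕ → Ω → ℝ)
    (hN_int : ∀ m ∈ Finset.Icc 1 m₀, Integrable (N m) P)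
    (h_exch : ∀ m ∈ Finset.Icc 1 m₀,
      P[N m | MeasurableSpace.comap M inferInstance]
        =ᵐ[P] P[N 1 | MeasurableSpace.comap M inferInstance]) :
    ∀ k ∈ Finset.Icc 1 m₀,
      ∫ ω, (∑ m ∈ Finset.Icc 1 m₀, if m ≤ M ω then N m ω else 0) ∂P
        = ∫ ω, (M ω : ℝ) * N k ω ∂P :=
  cluster_total_eq_size_times_member_general P m₀ M hM hM_range N hN_int h_exch
end

section
/- Let (Ω, ℱ, P) be a probability space, m₀ a positive integer, M : Ω → {1, …, m₀} a random variable (the cluster size), and N₁, …, N_{m₀} integrable real-valued random variables on Ω such that for every m ∈ {1, …, m₀}, E[N_m ∣ σ(M)] = E[N₁ ∣ σ(M)] almost surely (conditional exchangeability given cluster size). Then E[M^{-1} ∑_{m=1}^{M} N_m] = E[N₁]. -/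
/-! The weights `1{m ≤ M} / M` are bounded, `σ(M)`-measurable and sum to `1` over `m`. Such
weights can be pulled out of `E[· | σ(M)]`, so the expected cluster average equals the expectation
of `∑ₘ 1{m ≤ M} / M · E[N m | σ(M)] = E[N 1 | σ(M)]`, that is, `E[N 1]`. -/

open MeasureTheory Finset

namespace MeasureTheory

variable {Ω : Type*} {m mΩ : MeasurableSpace Ω} {μ : Measure Ω}

theorem integral_mul_condExp_of_bound (hm : m ≤ mΩ) [IsFiniteMeasure μ] {f g : Ω → ℝ}
    (hf : StronglyMeasurable[m] f) (hg : Integrable g μ) (c : ℝ)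
    (hf_bound : ∀ᵐ ω ∂μ, ‖f ω‖ ≤ c) :
    ∫ ω, f ω * μ[g | m] ω ∂μ = ∫ ω, f ω * g ω ∂μ := by
  rw [← integral_condExp hm (f := fun ω => f ω * g ω)]
  exact integral_congr_ae (condExp_stronglyMeasurable_mul_of_bound hm hf hg c hf_bound).symm

theorem integral_sum_mul_eq_of_condExp_eq (hm : m ≤ mΩ) [IsFiniteMeasure μ] {ι : Type*}
    (s : Finset ι) (w N : ι → Ω → ℝ) (X : Ω → ℝ)
    (hw_meas : ∀ i ∈ s, StronglyMeasurable[m] (w i))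
    (hw_bound : ∀ i ∈ s, ∃ c, ∀ᵐ ω ∂μ, ‖w i ω‖ ≤ c)
    (hw_sum : ∀ᵐ ω ∂μ, ∑ i ∈ s, w i ω = 1)
    (hN : ∀ i ∈ s, Integrable (N i) μ) (hN_condExp : ∀ i ∈ s, μ[N i | m] =ᵐ[μ] μ[X | m]) :
    ∫ ω, ∑ i ∈ s, w i ω * N i ω ∂μ = ∫ ω, X ω ∂μ := by
  have hw_aesm : ∀ i ∈ s, AEStronglyMeasurable (w i) μ := fun i hi =>
    ((hw_meas i hi).mono hm).aestronglyMeasurable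
  calc ∫ ω, ∑ i ∈ s, w i ω * N i ω ∂μ
      = ∑ i ∈ s, ∫ ω, w i ω * N i ω ∂μ := by
        refine integral_finsetSum s fun i hi => ?_
        obtain ⟨c, hc⟩ := hw_bound i hi
        exact (hN i hi).bdd_mul (hw_aesm i hi) hc
    _ = ∑ i ∈ s, ∫ ω, w i ω * μ[X | m] ω ∂μ := by
        refine sum_congr rfl fun i hi => ?_
        obtain ⟨c, hc⟩ := hw_bound i hi
        rw [← integral_mul_condExp_of_bound hm (hw_meas i hi) (hN i hi) c hc]
        exact integral_congr_ae ((hN_condExp i hi).mono fun ω h => by simp only [h])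
    _ = ∫ ω, ∑ i ∈ s, w i ω * μ[X | m] ω ∂μ := by
        refine (integral_finsetSum s fun i hi => ?_).symm
        obtain ⟨c, hc⟩ := hw_bound i hi
        exact integrable_condExp.bdd_mul (hw_aesm i hi) hc
    _ = ∫ ω, μ[X | m] ω ∂μ :=
        integral_congr_ae (hw_sum.mono fun ω h => by simp only [← sum_mul, h, one_mul])
    _ = ∫ ω, X ω ∂μ := integral_condExp hm

end MeasureTheory

noncomputable def memberWeight (m k : ℕ) : ℝ := if m ≤ k then (k : ℝ)⁻¹ else 0

theorem norm_memberWeight_le_one (m k : ℕ) : ‖memberWeight m k‖ ≤ 1 := by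
  unfold memberWeight
  split_ifs
  · rw [norm_inv, Real.norm_natCast]
    exact Nat.cast_inv_le_one k
  · simp

theorem sum_memberWeight {k n : ℕ} (hk : k ∈ Icc 1 n) : ∑ m ∈ Icc 1 n, memberWeight m k = 1 := by
  rw [mem_Icc] at hk
  have hfilter : (Icc 1 n).filter (· ≤ k) = Icc 1 k := by
    ext x; simp only [mem_filter, mem_Icc]; omega
  simp only [memberWeight]
  rw [← sum_filter, hfilter, sum_const, Nat.card_Icc, nsmul_eq_mul, Nat.add_sub_cancel]
  exact mul_inv_cancel₀ (Nat.cast_ne_zero.mpr (by omega))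

theorem inv_mul_sum_ite_le (s : Finset ℕ) (k : ℕ) (x : ℕ → ℝ) :
    (k : ℝ)⁻¹ * (∑ m ∈ s, if m ≤ k then x m else 0) = ∑ m ∈ s, memberWeight m k * x m := by
  rw [mul_sum]
  refine sum_congr rfl fun m _ => ?_
  unfold memberWeight
  split_ifs <;> simp

theorem cluster_average_eq_member_mean_general
    {Ω : Type*} [MeasurableSpace Ω] (P : Measure Ω) [IsProbabilityMeasure P]
    (m₀ : ℕ)
    (M : Ω → ℕ) (hM : Measurable M)
    (hM_range : ∀ ω, M ω ∈ Finset.Icc 1 m₀)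
    (N : ℕ → Ω → ℝ)
    (hN_int : ∀ m ∈ Finset.Icc 1 m₀, Integrable (N m) P)
    (h_exch : ∀ m ∈ Finset.Icc 1 m₀,
      P[N m | MeasurableSpace.comap M inferInstance]
        =ᵐ[P] P[N 1 | MeasurableSpace.comap M inferInstance]) :
    ∫ ω, (M ω : ℝ)⁻¹ * (∑ m ∈ Finset.Icc 1 m₀, if m ≤ M ω then N m ω else 0) ∂P
      = ∫ ω, N 1 ω ∂P := by
  have hM_comap : Measurable[MeasurableSpace.comap M inferInstance] M := .of_comap_le le_rfl
  simp_rw [inv_mul_sum_ite_le]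
  exact integral_sum_mul_eq_of_condExp_eq hM.comap_le _ (fun m ω => memberWeight m (M ω)) N (N 1)
    (fun m _ => ((measurable_of_countable (memberWeight m)).comp hM_comap).stronglyMeasurable)
    (fun m _ => ⟨1, .of_forall fun ω => norm_memberWeight_le_one m (M ω)⟩)
    (.of_forall fun ω => sum_memberWeight (hM_range ω)) hN_int h_exch

/-- For clustered data with conditionally exchangeable (given the cluster size `M`)
integrable variables `N 1, …, N m₀`, the expectation of the within-cluster average
`M⁻¹ ∑_{m=1}^{M} N m` equals `E[N 1]`. -/
theorem cluster_average_eq_member_mean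
    {Ω : Type*} [MeasurableSpace Ω] (P : Measure Ω) [IsProbabilityMeasure P]
    (m₀ : ℕ) (hm₀ : 0 < m₀)
    (M : Ω → ℕ) (hM : Measurable M)
    (hM_range : ∀ ω, M ω ∈ Finset.Icc 1 m₀)
    (N : ℕ → Ω → ℝ)
    (hN_int : ∀ m ∈ Finset.Icc 1 m₀, Integrable (N m) P)
    (h_exch : ∀ m ∈ Finset.Icc 1 m₀,
      P[N m | MeasurableSpace.comap M inferInstance]
        =ᵐ[P] P[N 1 | MeasurableSpace.comap M inferInstance]) :
    ∫ ω, (M ω : ℝ)⁻¹ * (∑ m ∈ Finset.Icc 1 m₀, if m ≤ M ω then N m ω else 0) ∂P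
      = ∫ ω, N 1 ω ∂P :=
  cluster_average_eq_member_mean_general P m₀ M hM hM_range N hN_int h_exch
end

section
/- Fix 0 < τ < ∞ and a positive integer v₀. Let (Ω, ℱ, P) be a probability space, K : Ω → {0, 1, …, v₀} a random variable, T₁, …, T_{v₀} : Ω → (0, τ] random variables, and (L₁, L₂) : Ω → ℝ² a random pair such that σ(L₁, L₂) is independent of σ(K, T₁, …, T_{v₀}). Define two finite Borel measures on (0, τ]: ν(B) = E[∑_{v=1}^{v₀} 1{v ≤ K} 1{T_v ∈ B}] (the expected complete-data counting measure) and ν_obs(B) = E[∑_{v=1}^{v₀} 1{v ≤ K} 1{T_v ∈ B} 1{L₁ < T_v ≤ L₂}] (the expected observed counting measure under left truncation at L₁ and right censoring at L₂). Then ν_obs has density r with respect to ν, where r(u) = P(L₁ < u ≤ L₂); that is, ν_obs(B) = ∫_B r(u) dν(u) for every Borel set B ⊆ (0, τ]. -/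
open MeasureTheory ProbabilityTheory
open scoped ENNReal

/-!
For each `v`, the observed summand `1{v ≤ K} 1_B(T_v) 1{L₁ < T_v ≤ L₂}` depends on `(L₁, L₂)` only
through the last factor. Since `(L₁, L₂)` is independent of `(K, T_v)`, the joint law is a product
and Tonelli lets one integrate `(L₁, L₂)` out first with `(K, T_v)` frozen, which replaces that
factor by `r(T_v)`. On the other side, `ν` is the sum over `v` of the images under `T_v` of `P`
weighted by `1{v ≤ K}`, so `∫_B r dν` is the same sum of expectations `E[1{v ≤ K} (1_B r)(T_v)]`.
-/

section

variable {Ω α β : Type*} [MeasurableSpace Ω] [MeasurableSpace α] [MeasurableSpace β]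
  {P : Measure Ω}

theorem measurable_indicator_Ioc_one {L₁ L₂ U : α → ℝ} (hL₁ : Measurable L₁)
    (hL₂ : Measurable L₂) (hU : Measurable U) :
    Measurable fun x => (Set.Ioc (L₁ x) (L₂ x)).indicator (1 : ℝ → ℝ≥0∞) (U x) := by
  simp only [Set.indicator_apply, Set.mem_Ioc, Pi.one_apply]
  exact Measurable.ite ((measurableSet_lt hL₁ hU).inter (measurableSet_le hU hL₂))
    measurable_const measurable_const

theorem lintegral_indicator_Ioc_one {L₁ L₂ : Ω → ℝ} (hL₁ : Measurable L₁) (hL₂ : Measurable L₂)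
    (t : ℝ) :
    ∫⁻ ω, (Set.Ioc (L₁ ω) (L₂ ω)).indicator 1 t ∂P = P {ω | L₁ ω < t ∧ t ≤ L₂ ω} := by
  have hs : MeasurableSet {ω | L₁ ω < t ∧ t ≤ L₂ ω} :=
    (measurableSet_lt hL₁ measurable_const).inter (measurableSet_le measurable_const hL₂)
  rw [← lintegral_indicator_one hs]
  rfl

theorem measurable_measure_mem_Ioc {L₁ L₂ : Ω → ℝ} (hL₁ : Measurable L₁)
    (hL₂ : Measurable L₂) [SFinite P] :
    Measurable fun t => P {ω | L₁ ω < t ∧ t ≤ L₂ ω} := by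
  simp_rw [← lintegral_indicator_Ioc_one hL₁ hL₂]
  exact Measurable.lintegral_prod_right'
    (measurable_indicator_Ioc_one (hL₁.comp measurable_snd) (hL₂.comp measurable_snd)
      measurable_fst)

theorem lintegral_eq_sum_lintegral_of_measure_eq {ι : Type*} (I : Finset ι)
    {w : ι → Ω → ℝ≥0∞} (hw : ∀ v, Measurable (w v)) {T : ι → Ω → α} (hT : ∀ v, Measurable (T v))
    {ν : Measure α}
    (hν : ∀ s, MeasurableSet s → ν s = ∫⁻ ω, ∑ v ∈ I, w v ω * s.indicator 1 (T v ω) ∂P)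
    {f : α → ℝ≥0∞} (hf : Measurable f) :
    ∫⁻ u, f u ∂ν = ∑ v ∈ I, ∫⁻ ω, w v ω * f (T v ω) ∂P := by
  have hν_sum : ν = ∑ v ∈ I, (P.withDensity (w v)).map (T v) := by
    ext s hs
    have hm : ∀ v ∈ I, Measurable fun ω => w v ω * s.indicator 1 (T v ω) :=
      fun v _ => (hw v).mul ((measurable_one.indicator hs).comp (hT v))
    rw [hν s hs, Measure.finsetSum_apply, lintegral_finsetSum _ hm]
    refine Finset.sum_congr rfl fun v _ => ?_
    rw [Measure.map_apply (hT v) hs, withDensity_apply _ (hT v hs),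
      ← lintegral_indicator (hT v hs)]
    refine lintegral_congr fun ω => ?_
    by_cases h : T v ω ∈ s <;> simp [h]
  rw [hν_sum, lintegral_finsetSum_measure]
  refine Finset.sum_congr rfl fun v _ => ?_
  rw [lintegral_map hf (hT v)]
  exact lintegral_withDensity_eq_lintegral_mul _ (hw v) (hf.comp (hT v))

namespace ProbabilityTheory

theorem IndepFun.lintegral_comp_eq_lintegral_lintegral [IsFiniteMeasure P] {X : Ω → α}
    {Y : Ω → β} (hXY : IndepFun X Y P) (hX : Measurable X) (hY : Measurable Y)
    {h : α → β → ℝ≥0∞} (hh : Measurable (Function.uncurry h)) :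
    ∫⁻ ω, h (X ω) (Y ω) ∂P = ∫⁻ ω, ∫⁻ ω', h (X ω') (Y ω) ∂P ∂P := by
  calc ∫⁻ ω, h (X ω) (Y ω) ∂P
      = ∫⁻ p, Function.uncurry h p ∂(P.map fun ω => (X ω, Y ω)) :=
        (lintegral_map hh (hX.prodMk hY)).symm
    _ = ∫⁻ y, ∫⁻ x, h x y ∂(P.map X) ∂(P.map Y) := by
        rw [hXY.map_prod_eq_prod_map_map hX.aemeasurable hY.aemeasurable,
          lintegral_prod_symm' _ hh]
        rfl
    _ = ∫⁻ ω, ∫⁻ x, h x (Y ω) ∂(P.map X) ∂P := lintegral_map hh.lintegral_prod_left' hY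
    _ = ∫⁻ ω, ∫⁻ ω', h (X ω') (Y ω) ∂P ∂P :=
        lintegral_congr fun ω => lintegral_map (hh.comp (measurable_id.prodMk measurable_const)) hX

theorem IndepFun.lintegral_mul_indicator_Ioc [IsFiniteMeasure P] {L₁ L₂ U : Ω → ℝ} {Z : Ω → β}
    (hind : IndepFun (fun ω => (L₁ ω, L₂ ω)) (fun ω => (Z ω, U ω)) P)
    (hL : Measurable fun ω => (L₁ ω, L₂ ω)) (hZ : Measurable Z) (hU : Measurable U)
    {f : β → ℝ → ℝ≥0∞} (hf : Measurable (Function.uncurry f)) :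
    ∫⁻ ω, f (Z ω) (U ω) * (Set.Ioc (L₁ ω) (L₂ ω)).indicator 1 (U ω) ∂P
      = ∫⁻ ω, f (Z ω) (U ω) * P {ω' | L₁ ω' < U ω ∧ U ω ≤ L₂ ω'} ∂P := by
  have hh : Measurable fun p : (ℝ × ℝ) × (β × ℝ) =>
      f p.2.1 p.2.2 * (Set.Ioc p.1.1 p.1.2).indicator 1 p.2.2 :=
    (hf.comp measurable_snd).mul (measurable_indicator_Ioc_one measurable_fst.fst
      measurable_fst.snd measurable_snd.snd)
  rw [hind.lintegral_comp_eq_lintegral_lintegral (h := fun ℓ y => f y.1 y.2 *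
    (Set.Ioc ℓ.1 ℓ.2).indicator 1 y.2) hL (hZ.prodMk hU) hh]
  refine lintegral_congr fun ω => ?_
  rw [lintegral_const_mul _ (measurable_indicator_Ioc_one hL.fst hL.snd measurable_const),
    lintegral_indicator_Ioc_one hL.fst hL.snd]

end ProbabilityTheory

end

theorem observed_counting_measure_density_general
    {Ω : Type*} [MeasurableSpace Ω] (P : Measure Ω) [IsProbabilityMeasure P]
    (τ : ℝ) (v₀ : ℕ)
    (K : Ω → ℕ) (hK_meas : Measurable K)
    (T : ℕ → Ω → ℝ) (hT_meas : ∀ v, Measurable (T v))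
    (L₁ L₂ : Ω → ℝ) (hL_meas : Measurable (fun ω => (L₁ ω, L₂ ω)))
    -- σ(L₁, L₂) is independent of σ(K, T₁, …, T_{v₀})
    (h_indep : Indep
      (MeasurableSpace.comap (fun ω => (L₁ ω, L₂ ω)) inferInstance)
      (MeasurableSpace.comap (fun ω => (K ω, fun v : Fin v₀ => T (v + 1) ω)) inferInstance)
      P)
    -- expected complete-data counting measure
    (ν : Measure ℝ)
    (hν : ∀ B : Set ℝ, MeasurableSet B →
      ν B = ∫⁻ ω, (∑ v ∈ Finset.Icc 1 v₀,
        (if v ≤ K ω then (1 : ℝ≥0∞) else 0) * B.indicator 1 (T v ω)) ∂P)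
    -- expected observed counting measure under truncation/censoring
    (ν_obs : Measure ℝ)
    (hν_obs : ∀ B : Set ℝ, MeasurableSet B →
      ν_obs B = ∫⁻ ω, (∑ v ∈ Finset.Icc 1 v₀,
        (if v ≤ K ω then (1 : ℝ≥0∞) else 0) * B.indicator 1 (T v ω)
          * (Set.Ioc (L₁ ω) (L₂ ω)).indicator 1 (T v ω)) ∂P) :
    ∀ B : Set ℝ, MeasurableSet B → B ⊆ Set.Ioc 0 τ →
      ν_obs B = ∫⁻ u in B, P {ω | L₁ ω < u ∧ u ≤ L₂ ω} ∂ν := by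
  intro B hB _
  set c : ℕ → ℕ → ℝ≥0∞ := fun v k => if v ≤ k then 1 else 0
  set r : ℝ → ℝ≥0∞ := fun u => P {ω | L₁ ω < u ∧ u ≤ L₂ ω}
  have hr : Measurable r := measurable_measure_mem_Ioc hL_meas.fst hL_meas.snd
  have hf : ∀ v, Measurable (Function.uncurry fun k t => c v k * B.indicator 1 t) := fun v =>
    ((measurable_from_nat (f := c v)).comp measurable_fst).mul
      ((measurable_one.indicator hB).comp measurable_snd)
  have h_indep_v : ∀ v ∈ Finset.Icc 1 v₀,
      IndepFun (fun ω => (L₁ ω, L₂ ω)) (fun ω => (K ω, T v ω)) P := by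
    intro v hv
    obtain ⟨i, rfl⟩ : ∃ i : Fin v₀, (i : ℕ) + 1 = v := ⟨⟨v - 1, by grind⟩, by grind⟩
    exact IndepFun.comp (φ := id) (ψ := fun y => (y.1, y.2 i)) h_indep measurable_id
      (by fun_prop)
  have h_observed : ∀ v ∈ Finset.Icc 1 v₀,
      ∫⁻ ω, c v (K ω) * B.indicator 1 (T v ω) * (Set.Ioc (L₁ ω) (L₂ ω)).indicator 1 (T v ω) ∂P
        = ∫⁻ ω, c v (K ω) * B.indicator r (T v ω) ∂P := fun v hv => by
    rw [(h_indep_v v hv).lintegral_mul_indicator_Ioc hL_meas hK_meas (hT_meas v) (hf v)]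
    refine lintegral_congr fun ω => ?_
    by_cases h : T v ω ∈ B <;> simp [h, r]
  have hm : ∀ v ∈ Finset.Icc 1 v₀, Measurable fun ω =>
      c v (K ω) * B.indicator 1 (T v ω) * (Set.Ioc (L₁ ω) (L₂ ω)).indicator 1 (T v ω) :=
    fun v _ => ((hf v).comp (hK_meas.prodMk (hT_meas v))).mul
      (measurable_indicator_Ioc_one hL_meas.fst hL_meas.snd (hT_meas v))
  rw [hν_obs B hB, lintegral_finsetSum _ hm, Finset.sum_congr rfl h_observed,
    ← lintegral_indicator hB, lintegral_eq_sum_lintegral_of_measure_eq _ (w := fun v ω => c v (K ω))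
      (fun v => (measurable_from_nat (f := c v)).comp hK_meas) hT_meas hν (hr.indicator hB)]

/-- Under independent left truncation `L₁` and right censoring `L₂` (condition C1),
the expected observed counting measure `ν_obs` has density `r(u) = P(L₁ < u ≤ L₂)`
with respect to the expected complete-data counting measure `ν`. -/
theorem observed_counting_measure_density
    {Ω : Type*} [MeasurableSpace Ω] (P : Measure Ω) [IsProbabilityMeasure P]
    (τ : ℝ) (hτ : 0 < τ) (v₀ : ℕ) (hv₀ : 0 < v₀)
    (K : Ω → ℕ) (hK_meas : Measurable K) (hK_range : ∀ ω, K ω ≤ v₀)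
    (T : ℕ → Ω → ℝ) (hT_meas : ∀ v, Measurable (T v))
    (hT_range : ∀ v ω, T v ω ∈ Set.Ioc 0 τ)
    (L₁ L₂ : Ω → ℝ) (hL_meas : Measurable (fun ω => (L₁ ω, L₂ ω)))
    -- σ(L₁, L₂) is independent of σ(K, T₁, …, T_{v₀})
    (h_indep : Indep
      (MeasurableSpace.comap (fun ω => (L₁ ω, L₂ ω)) inferInstance)
      (MeasurableSpace.comap (fun ω => (K ω, fun v : Fin v₀ => T (v + 1) ω)) inferInstance)
      P)
    -- expected complete-data counting measure
    (ν : Measure ℝ)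
    (hν : ∀ B : Set ℝ, MeasurableSet B →
      ν B = ∫⁻ ω, (∑ v ∈ Finset.Icc 1 v₀,
        (if v ≤ K ω then (1 : ℝ≥0∞) else 0) * B.indicator 1 (T v ω)) ∂P)
    -- expected observed counting measure under truncation/censoring
    (ν_obs : Measure ℝ)
    (hν_obs : ∀ B : Set ℝ, MeasurableSet B →
      ν_obs B = ∫⁻ ω, (∑ v ∈ Finset.Icc 1 v₀,
        (if v ≤ K ω then (1 : ℝ≥0∞) else 0) * B.indicator 1 (T v ω)
          * (Set.Ioc (L₁ ω) (L₂ ω)).indicator 1 (T v ω)) ∂P) :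
    ∀ B : Set ℝ, MeasurableSet B → B ⊆ Set.Ioc 0 τ →
      ν_obs B = ∫⁻ u in B, P {ω | L₁ ω < u ∧ u ≤ L₂ ω} ∂ν :=
  observed_counting_measure_density_general P τ v₀ K hK_meas T hT_meas L₁ L₂ hL_meas h_indep ν hν
    ν_obs hν_obs
end

section
/- Fix 0 < τ < ∞, a positive integer v₀, and a constant c < ∞. Let (Ω, ℱ, P) be a probability space, let 𝒢 ⊆ ℱ be a σ-algebra, let K : Ω → {0, 1, …, v₀} and T₁, …, T_{v₀} : Ω → (0, τ] be 𝒢-measurable random variables, let Y̌ : Ω × [0, τ] → [0, c] be jointly measurable with ω ↦ Y̌(ω, t) 𝒢-measurable for each t, and let (L₁, L₂) : Ω → ℝ² be a random pair with σ(L₁, L₂) independent of 𝒢. Set r(u) = P(L₁ < u ≤ L₂), define the finite Borel measures on (0, τ]: ν(B) = E[∑_{v=1}^{v₀} 1{v ≤ K} 1{T_v ∈ B}] and ν_obs(B) = E[∑_{v=1}^{v₀} 1{v ≤ K} 1{T_v ∈ B} 1{L₁ < T_v ≤ L₂}], and define the observed at-risk expectation y(u) = E[Y̌(·, u) 1{L₁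 < u ≤ L₂}]. Suppose there is a Borel set J ⊆ (0, τ] with ν((0, τ] \ J) = 0 and inf_{u ∈ J} r(u) E[Y̌(·, u)] > 0. Then (i) y(u) = r(u) E[Y̌(·, u)] for every u, and (ii) for every t ∈ (0, τ], ∫_{(0, t] ∩ J} y(u)^{-1} dν_obs(u) = ∫_{(0, t] ∩ J} (E[Y̌(·, u)])^{-1} dν(u); that is, the observed-data Nelson–Aalen estimand equals the complete-data cumulative transition intensity. -/
open MeasureTheory ProbabilityTheory
open scoped ENNReal

lemma indep_lintegral_mul_slice {Ω α β : Type*} [MeasurableSpace Ω]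
    [MeasurableSpace α] [MeasurableSpace β]
    (P : Measure Ω) [IsProbabilityMeasure P]
    {X : Ω → α} {W : Ω → β} (hX : Measurable X) (hW : Measurable W)
    (h : IndepFun X W P) {F : α → ℝ≥0∞} (hF : Measurable F)
    {C : Set (α × β)} (hC : MeasurableSet C) :
    ∫⁻ ω, F (X ω) * C.indicator 1 (X ω, W ω) ∂P
      = ∫⁻ ω, F (X ω) * (P.map W) {b | (X ω, b) ∈ C} ∂P := by
  haveI : IsProbabilityMeasure (P.map W) := Measure.isProbabilityMeasure_map hW.aemeasurable
  haveI : IsProbabilityMeasure (P.map X) := Measure.isProbabilityMeasure_map hX.aemeasurable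
  have hmap := (indepFun_iff_map_prod_eq_prod_map_map hX.aemeasurable hW.aemeasurable).mp h
  have hH : Measurable (fun p : α × β => F p.1 * C.indicator 1 p) :=
    (hF.comp measurable_fst).mul (measurable_one.indicator hC)
  have hG : Measurable (fun x => (P.map W) {b | (x, b) ∈ C}) :=
    measurable_measure_prodMk_left (ν := P.map W) hC
  calc ∫⁻ ω, F (X ω) * C.indicator 1 (X ω, W ω) ∂P
      = ∫⁻ p, F p.1 * C.indicator 1 p ∂(P.map (fun ω => (X ω, W ω))) := by
        rw [lintegral_map hH (hX.prodMk hW)]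
    _ = ∫⁻ p, F p.1 * C.indicator 1 p ∂((P.map X).prod (P.map W)) := by rw [hmap]
    _ = ∫⁻ x, ∫⁻ b, F x * C.indicator 1 (x, b) ∂(P.map W) ∂(P.map X) :=
        lintegral_prod _ hH.aemeasurable
    _ = ∫⁻ x, F x * (P.map W) {b | (x, b) ∈ C} ∂(P.map X) := by
        refine lintegral_congr fun x => ?_
        have h1 : ∀ b, C.indicator (1 : α × β → ℝ≥0∞) (x, b)
            = ({b | (x, b) ∈ C}).indicator 1 b := by
          intro b; by_cases hb : (x, b) ∈ C <;> simp [Set.indicator_apply, hb]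
        have hCx : MeasurableSet {b : β | (x, b) ∈ C} :=
          hC.preimage measurable_prodMk_left
        simp_rw [h1]
        rw [lintegral_const_mul _ (measurable_one.indicator hCx)]
        congr 1
        exact lintegral_indicator_one hCx
    _ = ∫⁻ ω, F (X ω) * (P.map W) {b | (X ω, b) ∈ C} ∂P := by
        rw [lintegral_map (f := fun x => F x * (P.map W) {b | (x, b) ∈ C}) (hF.mul hG) hX]

lemma meas_trunc_prob {Ω : Type*} [mΩ : MeasurableSpace Ω] (P : Measure Ω)
    [IsProbabilityMeasure P] {L₁ L₂ : Ω → ℝ}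
    (hW : Measurable fun ω => (L₁ ω, L₂ ω)) :
    Measurable fun u : ℝ => P {ω | L₁ ω < u ∧ u ≤ L₂ ω} := by
  haveI : IsProbabilityMeasure (P.map fun ω => (L₁ ω, L₂ ω)) :=
    Measure.isProbabilityMeasure_map hW.aemeasurable
  have hs : MeasurableSet {p : ℝ × (ℝ × ℝ) | p.2.1 < p.1 ∧ p.1 ≤ p.2.2} :=
    (measurableSet_lt measurable_snd.fst measurable_fst).inter
      (measurableSet_le measurable_fst measurable_snd.snd)
  have h := measurable_measure_prodMk_left (ν := P.map fun ω => (L₁ ω, L₂ ω)) hs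
  have he : (fun u : ℝ => P {ω | L₁ ω < u ∧ u ≤ L₂ ω})
      = fun u => (P.map fun ω => (L₁ ω, L₂ ω))
          (Prod.mk u ⁻¹' {p : ℝ × (ℝ × ℝ) | p.2.1 < p.1 ∧ p.1 ≤ p.2.2}) := by
    funext u
    rw [Measure.map_apply hW (hs.preimage measurable_prodMk_left)]
    rfl
  rw [he]; exact h

lemma meas_mean_sec {Ω : Type*} [mΩ : MeasurableSpace Ω] (P : Measure Ω) [SFinite P]
    {Y : Ω → ℝ → ℝ} (hY : Measurable (Function.uncurry Y)) :
    Measurable fun u : ℝ => ∫ ω, Y ω u ∂P := by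
  have h : StronglyMeasurable fun p : ℝ × Ω => Y p.2 p.1 :=
    (hY.comp measurable_swap).stronglyMeasurable
  exact h.integral_prod_right'.measurable

lemma nu_eq_sum {Ω : Type*} [mΩ : MeasurableSpace Ω] (P : Measure Ω) (v₀ : ℕ)
    {K : Ω → ℕ} (hK : Measurable K) {T : ℕ → Ω → ℝ} (hT : ∀ v, Measurable (T v))
    (ν : Measure ℝ)
    (hν : ∀ B : Set ℝ, MeasurableSet B →
      ν B = ∫⁻ ω, (∑ v ∈ Finset.Icc 1 v₀,
        (if v ≤ K ω then (1 : ℝ≥0∞) else 0) * B.indicator 1 (T v ω)) ∂P) :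
    ν = ∑ v ∈ Finset.Icc 1 v₀, (P.restrict {ω | v ≤ K ω}).map (T v) := by
  ext B hB
  have hmeas : ∀ v : ℕ, Measurable fun ω =>
      (if v ≤ K ω then (1 : ℝ≥0∞) else 0) * B.indicator 1 (T v ω) := by
    intro v
    exact (Measurable.ite (hK measurableSet_Ici) measurable_const measurable_const).mul
      ((measurable_one.indicator hB).comp (hT v))
  rw [hν B hB, Measure.finset_sum_apply, lintegral_finset_sum _ (fun v _ => hmeas v)]
  refine Finset.sum_congr rfl fun v _ => ?_
  have hSm : MeasurableSet {ω | v ≤ K ω} := hK measurableSet_Ici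
  have h1 : (fun ω => (if v ≤ K ω then (1 : ℝ≥0∞) else 0) * B.indicator 1 (T v ω))
      = Set.indicator (T v ⁻¹' B ∩ {ω | v ≤ K ω}) 1 := by
    funext ω
    by_cases h1 : v ≤ K ω <;> by_cases h2 : T v ω ∈ B <;>
      simp [Set.indicator_apply, h1, h2, Set.mem_preimage]
  rw [h1, lintegral_indicator_one ((hT v hB).inter hSm),
    Measure.map_apply (hT v) hB, Measure.restrict_apply (hT v hB)]

lemma nu_obs_eq_withDensity {Ω : Type*} [mΩ : MeasurableSpace Ω] (P : Measure Ω)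
    [IsProbabilityMeasure P] (v₀ : ℕ)
    {K : Ω → ℕ} (hK : Measurable K) {T : ℕ → Ω → ℝ} (hT : ∀ v, Measurable (T v))
    {L₁ L₂ : Ω → ℝ} (hW : Measurable fun ω => (L₁ ω, L₂ ω))
    (hindep : ∀ v : ℕ, IndepFun (fun ω => (K ω, T v ω)) (fun ω => (L₁ ω, L₂ ω)) P)
    (ν : Measure ℝ)
    (hν : ∀ B : Set ℝ, MeasurableSet B →
      ν B = ∫⁻ ω, (∑ v ∈ Finset.Icc 1 v₀,
        (if v ≤ K ω then (1 : ℝ≥0∞) else 0) * B.indicator 1 (T v ω)) ∂P)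
    (ν_obs : Measure ℝ)
    (hν_obs : ∀ B : Set ℝ, MeasurableSet B →
      ν_obs B = ∫⁻ ω, (∑ v ∈ Finset.Icc 1 v₀,
        (if v ≤ K ω then (1 : ℝ≥0∞) else 0) * B.indicator 1 (T v ω)
          * (Set.Ioc (L₁ ω) (L₂ ω)).indicator 1 (T v ω)) ∂P) :
    ν_obs = ν.withDensity (fun u => P {ω | L₁ ω < u ∧ u ≤ L₂ ω}) := by
  set R : ℝ → ℝ≥0∞ := fun u => P {ω | L₁ ω < u ∧ u ≤ L₂ ω} with hRdef
  have hRmeas : Measurable R := meas_trunc_prob (mΩ := mΩ) P hW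
  have hC : MeasurableSet {p : (ℕ × ℝ) × ℝ × ℝ | p.2.1 < p.1.2 ∧ p.1.2 ≤ p.2.2} :=
    (measurableSet_lt measurable_snd.fst measurable_fst.snd).inter
      (measurableSet_le measurable_fst.snd measurable_snd.snd)
  have hslice : ∀ u : ℝ, MeasurableSet {q : ℝ × ℝ | q.1 < u ∧ u ≤ q.2} := fun u =>
    (measurableSet_lt measurable_fst measurable_const).inter
      (measurableSet_le measurable_const measurable_snd)
  have hRmap : ∀ u, R u
      = (P.map (fun ω => (L₁ ω, L₂ ω))) {q : ℝ × ℝ | q.1 < u ∧ u ≤ q.2} := by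
    intro u
    rw [Measure.map_apply hW (hslice u)]
    rfl
  ext B hB
  have hSm : ∀ v : ℕ, MeasurableSet {ω | v ≤ K ω} := fun v => hK measurableSet_Ici
  have key : ∀ v : ℕ,
      Measurable (fun ω => (if v ≤ K ω then (1 : ℝ≥0∞) else 0) * B.indicator 1 (T v ω)
          * (Set.Ioc (L₁ ω) (L₂ ω)).indicator 1 (T v ω)) ∧
      (∫⁻ ω, (if v ≤ K ω then (1 : ℝ≥0∞) else 0) * B.indicator 1 (T v ω)
          * (Set.Ioc (L₁ ω) (L₂ ω)).indicator 1 (T v ω) ∂P)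
        = ∫⁻ ω, Set.indicator {ω | v ≤ K ω}
            (fun ω => B.indicator R (T v ω)) ω ∂P := by
    intro v
    have hX : Measurable (fun ω => (K ω, T v ω)) := hK.prodMk (hT v)
    have hF : Measurable (fun x : ℕ × ℝ =>
        (if v ≤ x.1 then (1 : ℝ≥0∞) else 0) * B.indicator 1 x.2) :=
      (Measurable.ite (measurableSet_le measurable_const measurable_fst)
        measurable_const measurable_const).mul
        ((measurable_one.indicator hB).comp measurable_snd)
    have h1 : (fun ω => (if v ≤ K ω then (1 : ℝ≥0∞) else 0) * B.indicator 1 (T v ω)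
          * (Set.Ioc (L₁ ω) (L₂ ω)).indicator 1 (T v ω))
        = fun ω => (fun x : ℕ × ℝ =>
            (if v ≤ x.1 then (1 : ℝ≥0∞) else 0) * B.indicator 1 x.2) (K ω, T v ω)
          * ({p : (ℕ × ℝ) × ℝ × ℝ | p.2.1 < p.1.2 ∧ p.1.2 ≤ p.2.2}).indicator 1
              ((K ω, T v ω), (L₁ ω, L₂ ω)) := by
      funext ω
      by_cases h2 : L₁ ω < T v ω ∧ T v ω ≤ L₂ ω <;>
        simp [Set.indicator_apply, Set.mem_Ioc, h2]
    constructor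
    · rw [h1]
      exact (hF.comp hX).mul
        ((measurable_one.indicator hC).comp ((hX.prodMk hW)))
    · rw [h1, indep_lintegral_mul_slice P hX hW (hindep v) hF hC]
      refine lintegral_congr fun ω => ?_
      have h2 : (P.map fun ω => (L₁ ω, L₂ ω))
          {b : ℝ × ℝ | ((K ω, T v ω), b)
            ∈ {p : (ℕ × ℝ) × ℝ × ℝ | p.2.1 < p.1.2 ∧ p.1.2 ≤ p.2.2}}
          = R (T v ω) := (hRmap (T v ω)).symm
      rw [h2]
      by_cases h3 : v ≤ K ω <;> by_cases h4 : T v ω ∈ B <;>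
        simp [Set.indicator_apply, h3, h4]
  calc ν_obs B
      = ∑ v ∈ Finset.Icc 1 v₀, ∫⁻ ω, (if v ≤ K ω then (1 : ℝ≥0∞) else 0)
          * B.indicator 1 (T v ω) * (Set.Ioc (L₁ ω) (L₂ ω)).indicator 1 (T v ω) ∂P := by
        rw [hν_obs B hB]
        exact lintegral_finset_sum _ (fun v _ => (key v).1)
    _ = ∑ v ∈ Finset.Icc 1 v₀, ∫⁻ ω, Set.indicator {ω | v ≤ K ω}
          (fun ω => B.indicator R (T v ω)) ω ∂P :=
        Finset.sum_congr rfl fun v _ => (key v).2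
    _ = ∑ v ∈ Finset.Icc 1 v₀, ∫⁻ u, B.indicator R u
          ∂((P.restrict {ω | v ≤ K ω}).map (T v)) := by
        refine Finset.sum_congr rfl fun v _ => ?_
        rw [lintegral_map (hRmeas.indicator hB) (hT v), ← lintegral_indicator (hSm v)]
    _ = ∫⁻ u, B.indicator R u ∂ν := by
        rw [nu_eq_sum P v₀ hK hT ν hν, lintegral_finset_sum_measure]
    _ = (ν.withDensity R) B := by
        rw [withDensity_apply _ hB, ← lintegral_indicator hB]

lemma part1_aux {Ω : Type*} [mΩ : MeasurableSpace Ω] (P : Measure Ω)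
    [IsProbabilityMeasure P] {L₁ L₂ : Ω → ℝ}
    (hW : Measurable fun ω => (L₁ ω, L₂ ω)) {f : Ω → ℝ} (hf : Measurable f) (u : ℝ)
    (hindep1 : IndepFun f
      (fun ω => (Set.Ioc (L₁ ω) (L₂ ω)).indicator (1 : ℝ → ℝ) u) P) :
    ∫ ω, f ω * (Set.Ioc (L₁ ω) (L₂ ω)).indicator 1 u ∂P
      = (P {ω | L₁ ω < u ∧ u ≤ L₂ ω}).toReal * ∫ ω, f ω ∂P := by
  have hsliceu : MeasurableSet {q : ℝ × ℝ | q.1 < u ∧ u ≤ q.2} :=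
    (measurableSet_lt measurable_fst measurable_const).inter
      (measurableSet_le measurable_const measurable_snd)
  have hsetA : MeasurableSet {ω | L₁ ω < u ∧ u ≤ L₂ ω} := hW hsliceu
  have hh : Measurable (fun q : ℝ × ℝ => (Set.Ioc q.1 q.2).indicator (1 : ℝ → ℝ) u) := by
    have he : (fun q : ℝ × ℝ => (Set.Ioc q.1 q.2).indicator (1 : ℝ → ℝ) u)
        = Set.indicator {q : ℝ × ℝ | q.1 < u ∧ u ≤ q.2} (fun _ => (1 : ℝ)) := by
      funext q
      by_cases hq : q.1 < u ∧ u ≤ q.2 <;> simp [Set.indicator_apply, Set.mem_Ioc, hq]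
    rw [he]; exact measurable_const.indicator hsliceu
  rw [hindep1.integral_fun_mul_eq_mul_integral hf.aestronglyMeasurable
    ((hh.comp hW).aestronglyMeasurable)]
  have hg1 : (fun ω => (Set.Ioc (L₁ ω) (L₂ ω)).indicator (1 : ℝ → ℝ) u)
      = Set.indicator {ω | L₁ ω < u ∧ u ≤ L₂ ω} (1 : Ω → ℝ) := by
    funext ω
    by_cases hq : L₁ ω < u ∧ u ≤ L₂ ω <;> simp [Set.indicator_apply, Set.mem_Ioc, hq]
  rw [hg1, integral_indicator_one hsetA, mul_comm, measureReal_def]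

/-- Identifiability of the population-averaged cumulative transition intensity under
independent left truncation and right censoring (conditions C1 and C4): the
observed-data Nelson–Aalen estimand equals the complete-data cumulative transition
intensity, and the observed at-risk expectation factorizes as `y(u) = r(u) E[Y̌(u)]`. -/
theorem nelson_aalen_identifiability
    {Ω : Type*} (𝒢 : MeasurableSpace Ω) [mΩ : MeasurableSpace Ω] (P : Measure Ω) [IsProbabilityMeasure P]
    (τ : ℝ) (hτ : 0 < τ) (v₀ : ℕ) (hv₀ : 0 < v₀) (c : ℝ) (hc : 0 ≤ c)
    (h𝒢 : 𝒢 ≤ mΩ)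
    (K : Ω → ℕ) (hK_meas : Measurable[𝒢] K) (hK_range : ∀ ω, K ω ≤ v₀)
    (T : ℕ → Ω → ℝ) (hT_meas : ∀ v, Measurable[𝒢] (T v))
    (hT_range : ∀ v ω, T v ω ∈ Set.Ioc 0 τ)
    (Y : Ω → ℝ → ℝ) (hY_meas : Measurable (Function.uncurry Y))
    (hY_sec : ∀ t, Measurable[𝒢] (fun ω => Y ω t))
    (hY_range : ∀ ω t, Y ω t ∈ Set.Icc 0 c)
    (L₁ L₂ : Ω → ℝ) (hL_meas : Measurable (fun ω => (L₁ ω, L₂ ω)))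
    -- σ(L₁, L₂) is independent of 𝒢
    (h_indep : Indep
      (MeasurableSpace.comap (fun ω => (L₁ ω, L₂ ω)) inferInstance) 𝒢 P)
    -- expected complete-data counting measure
    (ν : Measure ℝ)
    (hν : ∀ B : Set ℝ, MeasurableSet B →
      ν B = ∫⁻ ω, (∑ v ∈ Finset.Icc 1 v₀,
        (if v ≤ K ω then (1 : ℝ≥0∞) else 0) * B.indicator 1 (T v ω)) ∂P)
    -- expected observed counting measure
    (ν_obs : Measure ℝ)
    (hν_obs : ∀ B : Set ℝ, MeasurableSet B →
      ν_obs B = ∫⁻ ω, (∑ v ∈ Finset.Icc 1 v₀,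
        (if v ≤ K ω then (1 : ℝ≥0∞) else 0) * B.indicator 1 (T v ω)
          * (Set.Ioc (L₁ ω) (L₂ ω)).indicator 1 (T v ω)) ∂P)
    (J : Set ℝ) (hJ_meas : MeasurableSet J) (hJ_sub : J ⊆ Set.Ioc 0 τ)
    (hJ_null : ν (Set.Ioc 0 τ \ J) = 0)
    (h_inf : ∃ ε > (0:ℝ), ∀ u ∈ J,
      ε ≤ (P {ω | L₁ ω < u ∧ u ≤ L₂ ω}).toReal * ∫ ω, Y ω u ∂P) :
    (∀ u : ℝ,
      ∫ ω, Y ω u * (Set.Ioc (L₁ ω) (L₂ ω)).indicator 1 u ∂P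
        = (P {ω | L₁ ω < u ∧ u ≤ L₂ ω}).toReal * ∫ ω, Y ω u ∂P) ∧
    (∀ t ∈ Set.Ioc 0 τ,
      ∫⁻ u in Set.Ioc 0 t ∩ J,
          ENNReal.ofReal (∫ ω, Y ω u * (Set.Ioc (L₁ ω) (L₂ ω)).indicator 1 u ∂P)⁻¹ ∂ν_obs
        = ∫⁻ u in Set.Ioc 0 t ∩ J,
            ENNReal.ofReal (∫ ω, Y ω u ∂P)⁻¹ ∂ν) := by
  -- measurability w.r.t. the ambient σ-algebra
  have hKm : Measurable[mΩ] K := hK_meas.mono h𝒢 le_rfl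
  have hTm : ∀ v, Measurable[mΩ] (T v) := fun v => (hT_meas v).mono h𝒢 le_rfl
  have hW : Measurable[mΩ] (fun ω => (L₁ ω, L₂ ω)) := hL_meas
  have hprodle : (@Prod.instMeasurableSpace Ω ℝ 𝒢 _)
      ≤ (@Prod.instMeasurableSpace Ω ℝ mΩ _) :=
    sup_le_sup (MeasurableSpace.comap_mono h𝒢) le_rfl
  have hYm : Measurable[(@Prod.instMeasurableSpace Ω ℝ mΩ _)] (Function.uncurry Y) :=
    hY_meas
  have hsliceu : ∀ u : ℝ, MeasurableSet {q : ℝ × ℝ | q.1 < u ∧ u ≤ q.2} := fun u =>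
    (measurableSet_lt measurable_fst measurable_const).inter
      (measurableSet_le measurable_const measurable_snd)
  have hsetA : ∀ u : ℝ, MeasurableSet[mΩ] {ω | L₁ ω < u ∧ u ≤ L₂ ω} := fun u =>
    hW (hsliceu u)
  -- part (i)
  have part1 : ∀ u : ℝ,
      ∫ ω, Y ω u * (Set.Ioc (L₁ ω) (L₂ ω)).indicator 1 u ∂P
        = (P {ω | L₁ ω < u ∧ u ≤ L₂ ω}).toReal * ∫ ω, Y ω u ∂P := by
    intro u
    have hsliceu' : MeasurableSet {q : ℝ × ℝ | q.1 < u ∧ u ≤ q.2} := hsliceu u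
    have hh : Measurable (fun q : ℝ × ℝ => (Set.Ioc q.1 q.2).indicator (1 : ℝ → ℝ) u) := by
      have he : (fun q : ℝ × ℝ => (Set.Ioc q.1 q.2).indicator (1 : ℝ → ℝ) u)
          = Set.indicator {q : ℝ × ℝ | q.1 < u ∧ u ≤ q.2} (fun _ => (1 : ℝ)) := by
        funext q
        by_cases hq : q.1 < u ∧ u ≤ q.2 <;> simp [Set.indicator_apply, Set.mem_Ioc, hq]
      rw [he]; exact measurable_const.indicator hsliceu'
    have hgW : (fun ω => (Set.Ioc (L₁ ω) (L₂ ω)).indicator (1 : ℝ → ℝ) u)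
        = (fun q : ℝ × ℝ => (Set.Ioc q.1 q.2).indicator (1 : ℝ → ℝ) u)
            ∘ (fun ω => (L₁ ω, L₂ ω)) := rfl
    have hYum : Measurable[mΩ] (fun ω => Y ω u) := (hY_sec u).mono h𝒢 le_rfl
    have hindep1 : IndepFun (fun ω => Y ω u)
        (fun ω => (Set.Ioc (L₁ ω) (L₂ ω)).indicator (1 : ℝ → ℝ) u) P := by
      rw [IndepFun_iff_Indep, hgW, ← MeasurableSpace.comap_comp]
      exact indep_of_indep_of_le_left
        (indep_of_indep_of_le_right h_indep.symm
          (MeasurableSpace.comap_mono hh.comap_le))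
        ((hY_sec u).comap_le)
    exact part1_aux (mΩ := mΩ) P hW hYum u hindep1
  refine ⟨part1, ?_⟩
  -- part (ii)
  intro t ht
  have hEmeas : MeasurableSet (Set.Ioc 0 t ∩ J) := measurableSet_Ioc.inter hJ_meas
  have hindepX : ∀ v : ℕ,
      IndepFun (fun ω => (K ω, T v ω)) (fun ω => (L₁ ω, L₂ ω)) P := by
    intro v
    rw [IndepFun_iff_Indep]
    exact indep_of_indep_of_le_left
      (indep_of_indep_of_le_right h_indep.symm le_rfl)
      ((hK_meas.prodMk (hT_meas v)).comap_le)
  have hobs := nu_obs_eq_withDensity (mΩ := mΩ) P v₀ hKm hTm hW hindepX ν hν ν_obs hν_obs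
  have hRmeas : Measurable fun u : ℝ => P {ω | L₁ ω < u ∧ u ≤ L₂ ω} :=
    meas_trunc_prob (mΩ := mΩ) P hW
  have hImeas : Measurable fun u : ℝ => ∫ ω, Y ω u ∂P := meas_mean_sec (mΩ := mΩ) P hYm
  -- rewrite the inner integrals via part (i)
  have hsimp : (fun u => ENNReal.ofReal
        (∫ ω, Y ω u * (Set.Ioc (L₁ ω) (L₂ ω)).indicator 1 u ∂P)⁻¹)
      = fun u => ENNReal.ofReal
        ((P {ω | L₁ ω < u ∧ u ≤ L₂ ω}).toReal * ∫ ω, Y ω u ∂P)⁻¹ := by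
    funext u; rw [part1 u]
  have hgmeas : Measurable (fun u => ENNReal.ofReal
      ((P {ω | L₁ ω < u ∧ u ≤ L₂ ω}).toReal * ∫ ω, Y ω u ∂P)⁻¹) :=
    ((hRmeas.ennreal_toReal.mul hImeas).inv).ennreal_ofReal
  rw [hsimp, hobs, restrict_withDensity hEmeas,
    lintegral_withDensity_eq_lintegral_mul _ hRmeas hgmeas]
  refine setLIntegral_congr_fun hEmeas (fun u hu => ?_)
  obtain ⟨ε, hε, hεJ⟩ := h_inf
  have hab : ε ≤ (P {ω | L₁ ω < u ∧ u ≤ L₂ ω}).toReal * ∫ ω, Y ω u ∂P := hεJ u hu.2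
  set a : ℝ := (P {ω | L₁ ω < u ∧ u ≤ L₂ ω}).toReal with ha_def
  set b : ℝ := ∫ ω, Y ω u ∂P with hb_def
  have hab' : 0 < a * b := lt_of_lt_of_le hε hab
  have ha : 0 < a := by
    rcases lt_or_ge 0 a with h | h
    · exact h
    · exfalso
      have : a = 0 := le_antisymm h ENNReal.toReal_nonneg
      rw [this, zero_mul] at hab'
      exact lt_irrefl 0 hab'
  show P {ω | L₁ ω < u ∧ u ≤ L₂ ω} * ENNReal.ofReal (a * b)⁻¹ = ENNReal.ofReal b⁻¹
  calc P {ω | L₁ ω < u ∧ u ≤ L₂ ω} * ENNReal.ofReal (a * b)⁻¹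
      = ENNReal.ofReal a * ENNReal.ofReal (a * b)⁻¹ := by
        rw [ha_def, ENNReal.ofReal_toReal (measure_ne_top P _)]
    _ = ENNReal.ofReal (a * (a * b)⁻¹) :=
        (ENNReal.ofReal_mul ENNReal.toReal_nonneg).symm
    _ = ENNReal.ofReal b⁻¹ := by
        congr 1
        rw [mul_inv, ← mul_assoc, mul_inv_cancel₀ ha.ne', one_mul]
end
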